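/- arXiv:1803.05309 — 2 statements merged into one kernel-verified Lean document; each statement's English description precedes it below -/
import Mathlib

section
/- For every real x and every real θ, the family of complex numbers (s ∈ ℤ) ↦ i^s · J_s(x) · exp(i s θ) is absolutely summable, i.e., the sum over s ∈ ℤ of |i^s · J_s(x) · exp(i s θ)| = |J_s(x)| is finite. -/
open MeasureTheory intervalIntegral

/-- Bessel function of the first kind of integer order `s`, defined by its
integral representation `J_s(x) = (1/(2π)) ∫_{-π}^{π} exp(i(x sin τ − s τ)) dτ`. -/
noncomputable def besselJ (s : ℤ) (x : ℝ) : ℂ :=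
  (1 / (2 * Real.pi)) *
    ∫ τ in (-Real.pi)..Real.pi, Complex.exp (Complex.I * (x * Real.sin τ - s * τ))

/-!
`J_s(x)` is the `s`-th Fourier coefficient of the smooth `2π`-periodic function
`τ ↦ exp(i x sin τ)`. Integrating by parts twice, the Fourier coefficients of a `C²` periodic
function are `O(1/s²)`, hence absolutely summable; the factors `i^s` and `exp(i s θ)` have
modulus one.
-/

open Complex
open scoped Real

theorem Function.Periodic.deriv {𝕜 F : Type*} [NontriviallyNormedField 𝕜] [NormedAddCommGroup F]
    [NormedSpace 𝕜 F] {f : 𝕜 → F} {T : 𝕜} (hf : Function.Periodic f T) :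
    Function.Periodic (deriv f) T := fun x => by
  rw [← deriv_comp_add_const, show (fun y => f (y + T)) = f from funext hf]

section FourierDecay

variable {a b : ℝ} (hab : a < b)

theorem norm_fourierCoeffOn_le {E : Type*} [NormedAddCommGroup E] [NormedSpace ℂ E] {f : ℝ → E}
    {C : ℝ} (hC : ∀ x ∈ Set.Icc a b, ‖f x‖ ≤ C) (n : ℤ) : ‖fourierCoeffOn hab f n‖ ≤ C := by
  have hba : 0 < b - a := sub_pos.2 hab
  have hint : ‖∫ x in a..b, fourier (-n) (x : AddCircle (b - a)) • f x‖ ≤ C * |b - a| :=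
    norm_integral_le_of_norm_le_const fun x hx => by
      rw [norm_smul, fourier_apply, Circle.norm_coe, one_mul]
      exact hC x (Set.Ioc_subset_Icc_self (Set.uIoc_of_le hab.le ▸ hx))
  rw [abs_of_pos hba] at hint
  rw [fourierCoeffOn_eq_integral, norm_smul, Real.norm_eq_abs, abs_of_pos (by positivity)]
  calc 1 / (b - a) * ‖∫ x in a..b, fourier (-n) (x : AddCircle (b - a)) • f x‖
      ≤ 1 / (b - a) * (C * (b - a)) := by gcongr
    _ = C := by field_simp

/-- Integration by parts; the boundary term vanishes because `f b = f a`. -/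
theorem fourierCoeffOn_eq_div_mul_fourierCoeffOn_deriv {f : ℝ → ℂ} (hf : ContDiff ℝ 1 f)
    (hfab : f b = f a) {n : ℤ} (hn : n ≠ 0) :
    fourierCoeffOn hab f n = (b - a) / (2 * π * I * n) * fourierCoeffOn hab (deriv f) n := by
  rw [fourierCoeffOn_of_hasDerivAt hab hn
    (fun x _ => (hf.differentiable one_ne_zero x).hasDerivAt)
    ((hf.continuous_deriv le_rfl).intervalIntegrable _ _), hfab, sub_self, mul_zero, zero_sub]
  have : (n : ℂ) ≠ 0 := Int.cast_ne_zero.2 hn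
  have : (π : ℂ) ≠ 0 := ofReal_ne_zero.2 Real.pi_ne_zero
  field_simp

theorem summable_norm_fourierCoeffOn_of_contDiff_two {f : ℝ → ℂ} (hf : ContDiff ℝ 2 f)
    (hper : Function.Periodic f (b - a)) : Summable fun n => ‖fourierCoeffOn hab f n‖ := by
  have hf' : ContDiff ℝ 1 (deriv f) := hf.deriv'
  obtain ⟨C, hC⟩ := isCompact_Icc.exists_bound_of_continuousOn
    (hf'.continuous_deriv le_rfl).continuousOn (s := Set.Icc a b)
  have hb : ∀ g : ℝ → ℂ, Function.Periodic g (b - a) → g b = g a := fun g hg => by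
    simpa using hg a
  refine .of_norm_bounded_eventually
    ((Real.summable_one_div_int_pow.2 one_lt_two).mul_left (((b - a) / (2 * π)) ^ 2 * C)) ?_
  filter_upwards [Filter.eventually_cofinite_ne 0] with n hn
  rw [norm_norm, fourierCoeffOn_eq_div_mul_fourierCoeffOn_deriv hab hf.of_succ (hb f hper) hn,
    fourierCoeffOn_eq_div_mul_fourierCoeffOn_deriv hab hf' (hb _ hper.deriv) hn]
  have hfactor : ‖((b : ℂ) - a) / (2 * π * I * n)‖ = (b - a) / (2 * π) / |(n : ℝ)| := by
    rw [← ofReal_sub, norm_div, norm_real, Real.norm_of_nonneg (sub_pos.2 hab).le]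
    simp [abs_of_pos Real.pi_pos, div_div]
  calc _ = ((b - a) / (2 * π)) ^ 2 * ‖fourierCoeffOn hab (deriv (deriv f)) n‖ * (1 / n ^ 2) := by
        rw [norm_mul, norm_mul, hfactor, ← sq_abs (n : ℝ)]
        ring
    _ ≤ ((b - a) / (2 * π)) ^ 2 * C * (1 / n ^ 2) := by
        gcongr
        exact norm_fourierCoeffOn_le hab hC n

end FourierDecay

theorem besselJ_eq_fourierCoeffOn (s : ℤ) (x : ℝ) :
    besselJ s x = fourierCoeffOn (neg_lt_self Real.pi_pos)
      (fun τ => exp (I * (x * Real.sin τ))) s := by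
  have hlen : ((π - -π : ℝ) : ℂ) = 2 * π := by push_cast; ring
  rw [besselJ, fourierCoeffOn_eq_integral, real_smul, ofReal_div, ofReal_one, hlen]
  congr 1
  refine integral_congr fun τ _ => ?_
  rw [smul_eq_mul, fourier_coe_apply, ← exp_add, hlen]
  congr 1
  field_simp
  push_cast
  ring

theorem stmt_5 (x θ : ℝ) :
    Summable (fun s : ℤ =>
      ‖Complex.I ^ s * besselJ s x * Complex.exp (Complex.I * s * θ)‖) := by
  have hnorm (s : ℤ) : ‖I ^ s * besselJ s x * exp (I * s * θ)‖ = ‖besselJ s x‖ := by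
    rw [norm_mul, norm_mul, norm_zpow, norm_I, one_zpow, one_mul, norm_exp]
    simp
  simp_rw [hnorm, besselJ_eq_fourierCoeffOn]
  refine summable_norm_fourierCoeffOn_of_contDiff_two _ (contDiff_exp.comp (contDiff_const.mul
    (contDiff_const.mul (ofRealCLM.contDiff.comp Real.contDiff_sin)))) fun τ => ?_
  simp [show π - -π = 2 * π by ring]
end

section
/- (Far-field expansion of the distance, underlying the plane-wave approximation of the incident field) Let a, r ∈ ℝ² with ‖a‖ > ‖r‖. Then | ‖a − r‖ − ( ‖a‖ − ⟪a/‖a‖, r⟫ ) | ≤ ‖r‖² / (‖a‖ − ‖r‖), where ⟪·,·⟫ denotes the Euclidean inner product. In particular, for fixed r, ‖a − r‖ = ‖a‖ − ⟪a/‖a‖, r⟫ + O(1/‖a‖) as ‖a‖ → ∞. -/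
open RealInnerProductSpace in
/-- Far-field expansion of the distance underlying the plane-wave approximation of the
incident field: `|‖a − r‖ − (‖a‖ − ⟪a/‖a‖, r⟫)| ≤ ‖r‖ ^ 2 / (‖a‖ − ‖r‖)`. -/
theorem stmt_11 (a r : EuclideanSpace ℝ (Fin 2)) (h : ‖r‖ < ‖a‖) :
    |‖a - r‖ - (‖a‖ - ⟪‖a‖⁻¹ • a, r⟫)| ≤ ‖r‖ ^ 2 / (‖a‖ - ‖r‖) := by
  have hA : (0:ℝ) < ‖a‖ := lt_of_le_of_lt (norm_nonneg r) h
  have hinner : ⟪‖a‖⁻¹ • a, r⟫ = ‖a‖⁻¹ * ⟪a, r⟫ := real_inner_smul_left a r _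
  rw [hinner]
  have hcs : |⟪a, r⟫| ≤ ‖a‖ * ‖r‖ := abs_real_inner_le_norm a r
  have hcs' := abs_le.1 hcs
  have hAt : |‖a‖⁻¹ * ⟪a, r⟫| ≤ ‖r‖ := by
    rw [abs_mul, abs_inv, abs_norm, inv_mul_le_iff₀ hA]
    linarith [hcs]
  have hAt' := abs_le.1 hAt
  set u := ‖a - r‖ with hu
  set v := ‖a‖ - ‖a‖⁻¹ * ⟪a, r⟫ with hv
  clear_value u v
  have hvge : ‖a‖ - ‖r‖ ≤ v := by
    have : ‖a‖⁻¹ * ⟪a, r⟫ ≤ ‖r‖ := hAt'.2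
    simp only [hv]; linarith
  have hsq : u ^ 2 = ‖a‖ ^ 2 - 2 * ⟪a, r⟫ + ‖r‖ ^ 2 := by
    rw [hu, @norm_sub_sq_real]
  have hvsq : v ^ 2 = ‖a‖ ^ 2 - 2 * ⟪a, r⟫ + (‖a‖⁻¹ * ⟪a, r⟫) ^ 2 := by
    rw [hv]
    field_simp
    ring
  have hnum : u ^ 2 - v ^ 2 = ‖r‖ ^ 2 - (‖a‖⁻¹ * ⟪a, r⟫) ^ 2 := by
    rw [hsq, hvsq]; ring
  have hnum0 : 0 ≤ u ^ 2 - v ^ 2 := by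
    rw [hnum]
    nlinarith [hAt'.1, hAt'.2]
  have hu0 : 0 ≤ u := hu ▸ norm_nonneg _
  have hv0 : 0 < v := lt_of_lt_of_le (by linarith) hvge
  have huv : v ≤ u := by nlinarith
  rw [abs_of_nonneg (by linarith)]
  rw [le_div_iff₀ (by linarith : (0:ℝ) < ‖a‖ - ‖r‖)]
  have key : (u - v) * (‖a‖ - ‖r‖) ≤ (u - v) * (u + v) :=
    mul_le_mul_of_nonneg_left (by linarith) (by linarith)
  have key2 : (u - v) * (u + v) = u ^ 2 - v ^ 2 := by ring
  linarith [key, key2, hnum, sq_nonneg (‖a‖⁻¹ * ⟪a, r⟫)]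
end
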